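/- Let Δ be a flag weak 3-pseudomanifold on n vertices and let σ = {v_1, v_2, v_3, v_4} be a facet of Δ. Then the sum over all six edges e ⊆ σ of f_0(lk_Δ e) is at most n + 16. -/

import Mathlib

open Finset

/-- An abstract simplicial complex on vertex type `V`, given by a finite,
downward-closed family of finite faces containing the empty face. -/
structure SC (V : Type*) [DecidableEq V] where
  faces : Finset (Finset V)
  empty_mem : ∅ ∈ faces
  down_closed : ∀ ⦃σ τ : Finset V⦄, σ ∈ faces → τ ⊆ σ → τ ∈ faces

namespace SC

variable {V : Type*} [DecidableEq V]

/-- The vertex set of a complex. -/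
def vertexSet (Δ : SC V) : Finset V := Δ.faces.sup id

/-- `fNum Δ i` is the number of `i`-dimensional faces (faces of cardinality `i+1`). -/
def fNum (Δ : SC V) (i : ℕ) : ℕ := (Δ.faces.filter fun σ => σ.card = i + 1).card

/-- A complex is flag if it is the clique complex of its graph, i.e. every set of
vertices which is pairwise joined by edges is a face (equivalently, all minimal
non-faces have cardinality two). -/
def IsFlag (Δ : SC V) : Prop :=
  ∀ σ : Finset V, (∀ u ∈ σ, ∀ v ∈ σ, ({u, v} : Finset V) ∈ Δ.faces) → σ ∈ Δ.faces

/-- The restriction `Δ[W]` of `Δ` to a set `W` of vertices. -/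
def restrict (Δ : SC V) (W : Finset V) : SC V where
  faces := Δ.faces.filter fun σ => σ ⊆ W
  empty_mem := by simp [Δ.empty_mem]
  down_closed := by
    intro σ τ hσ hτ
    simp only [mem_filter] at hσ ⊢
    exact ⟨Δ.down_closed hσ.1 hτ, hτ.trans hσ.2⟩

/-- The link of a face `σ` in `Δ`. -/
def link (Δ : SC V) (σ : Finset V) : SC V where
  faces := insert ∅ (Δ.faces.filter fun τ => Disjoint τ σ ∧ τ ∪ σ ∈ Δ.faces)
  empty_mem := mem_insert_self _ _
  down_closed := by
    intro τ ρ hτ hρ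
    rcases mem_insert.1 hτ with h | h
    · subst h
      simp [Finset.subset_empty.1 hρ]
    · simp only [mem_filter] at h
      refine mem_insert.2 (Or.inr ?_)
      simp only [mem_filter]
      exact ⟨Δ.down_closed h.1 hρ, h.2.1.mono_left hρ,
        Δ.down_closed h.2.2 (Finset.union_subset_union hρ Finset.Subset.rfl)⟩

/-- A facet is a maximal face. -/
def IsFacet (Δ : SC V) (σ : Finset V) : Prop :=
  σ ∈ Δ.faces ∧ ∀ τ ∈ Δ.faces, σ ⊆ τ → σ = τ

/-- `Δ` is pure of dimension `D`: all faces have dimension at most `D` and all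
facets have dimension exactly `D`. -/
def Pure (Δ : SC V) (D : ℕ) : Prop :=
  (∀ σ ∈ Δ.faces, σ.card ≤ D + 1) ∧ (∃ σ ∈ Δ.faces, σ.card = D + 1) ∧
    ∀ σ : Finset V, Δ.IsFacet σ → σ.card = D + 1

/-- The graph (1-skeleton) of a complex. -/
def graph (Δ : SC V) : SimpleGraph V where
  Adj u v := u ≠ v ∧ ({u, v} : Finset V) ∈ Δ.faces
  symm := by
    constructor
    intro u v h
    exact ⟨h.1.symm, by rw [Finset.pair_comm]; exact h.2⟩
  loopless := by constructor; intro u h; exact h.1 rfl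

/-- A complex is connected if its vertex set is nonempty and any two vertices are
joined by a path in its graph. -/
def Connected (Δ : SC V) : Prop :=
  Δ.vertexSet.Nonempty ∧ ∀ u ∈ Δ.vertexSet, ∀ v ∈ Δ.vertexSet, Δ.graph.Reachable u v

/-- The reduced Euler characteristic `χ̃(Δ) = -1 + f₀ - f₁ + f₂ - ⋯`. -/
def redChar (Δ : SC V) : ℤ := -∑ σ ∈ Δ.faces, (-1 : ℤ) ^ σ.card

/-- `Δ` is an Eulerian complex of dimension `D`: it is pure of dimension `D` and the
reduced Euler characteristic of the link of every face `σ` (including `σ = ∅`)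
equals `(-1) ^ (dim lk σ)`, written multiplicatively to avoid signed dimensions. -/
def IsEulerian (Δ : SC V) (D : ℕ) : Prop :=
  Δ.Pure D ∧ ∀ σ ∈ Δ.faces, (Δ.link σ).redChar * (-1) ^ σ.card = (-1) ^ D

/-- A weak pseudomanifold of dimension `D`: pure and every ridge ((D-1)-face) lies
in exactly two facets. -/
def IsWeakPseudo (Δ : SC V) (D : ℕ) : Prop :=
  Δ.Pure D ∧ ∀ σ ∈ Δ.faces, σ.card = D →
    (Δ.faces.filter fun τ => σ ⊆ τ ∧ τ.card = D + 1).card = 2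

/-- A normal pseudomanifold of dimension `D`: a connected weak pseudomanifold all of
whose links of faces of dimension `≤ D - 2` are connected. -/
def IsNormalPseudo (Δ : SC V) (D : ℕ) : Prop :=
  Δ.IsWeakPseudo D ∧ Δ.Connected ∧
    ∀ σ ∈ Δ.faces, σ.card + 1 ≤ D → (Δ.link σ).Connected

/-- The join of two complexes (on disjoint vertex sets). -/
def join (Δ Γ : SC V) : SC V where
  faces := (Δ.faces ×ˢ Γ.faces).image fun p => p.1 ∪ p.2
  empty_mem := Finset.mem_image.2 ⟨(∅, ∅),
    Finset.mem_product.2 ⟨Δ.empty_mem, Γ.empty_mem⟩, Finset.union_empty ∅⟩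
  down_closed := by
    intro σ τ hσ hτ
    rw [Finset.mem_image] at hσ ⊢
    obtain ⟨⟨a, b⟩, hab, rfl⟩ := hσ
    rw [Finset.mem_product] at hab
    refine ⟨(τ ∩ a, τ ∩ b), Finset.mem_product.2
      ⟨Δ.down_closed hab.1 Finset.inter_subset_right,
       Γ.down_closed hab.2 Finset.inter_subset_right⟩, ?_⟩
    rw [← Finset.inter_union_distrib_left]
    exact Finset.inter_eq_left.2 hτ

/-- The trivial complex, whose only face is the empty face (identity for join). -/
def trivialSC : SC V where
  faces := {∅}
  empty_mem := Finset.mem_singleton_self ∅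
  down_closed := by
    intro σ τ hσ hτ
    simp only [Finset.mem_singleton] at hσ ⊢
    subst hσ
    exact Finset.subset_empty.1 hτ

/-- The join of a finite family of complexes. -/
def bigJoin : {k : ℕ} → (Fin k → SC V) → SC V
  | 0, _ => trivialSC
  | _ + 1, C => (C 0).join (bigJoin fun i => C i.succ)

/-- `Δ` is a cycle (circle) with `n` vertices: a connected, 1-dimensional complex
all of whose vertices have exactly two neighbours. -/
def IsCycle (Δ : SC V) (n : ℕ) : Prop :=
  Δ.vertexSet.card = n ∧ (∀ σ ∈ Δ.faces, σ.card ≤ 2) ∧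
    (∀ v ∈ Δ.vertexSet, (Δ.link {v}).vertexSet.card = 2) ∧ Δ.Connected

/-- `Δ` is the boundary complex of the `d`-dimensional cross-polytope: its vertices
come in `d` antipodal pairs and the faces are exactly the sets containing at most
one vertex of each pair. -/
def IsCrossPolytopeBoundary (Δ : SC V) (d : ℕ) : Prop :=
  ∃ x y : Fin d → V, Function.Injective x ∧ Function.Injective y ∧
    (∀ i j, x i ≠ y j) ∧
    ∀ σ : Finset V, σ ∈ Δ.faces ↔
      ((∀ v ∈ σ, ∃ i, v = x i ∨ v = y i) ∧ ∀ i, ¬(x i ∈ σ ∧ y i ∈ σ))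

/-- `Δ` is a simplicial 2-sphere: a connected weak 2-pseudomanifold whose vertex
links are circles and whose reduced Euler characteristic is 1. -/
def IsSphere2 (Δ : SC V) : Prop :=
  Δ.Connected ∧ Δ.IsWeakPseudo 2 ∧
    (∀ v ∈ Δ.vertexSet, ∃ n, 3 ≤ n ∧ (Δ.link {v}).IsCycle n) ∧ Δ.redChar = 1

/-- `Δ` is a (closed) simplicial 3-manifold: connected, pure of dimension 3, and the
link of every vertex is a simplicial 2-sphere. -/
def Is3Manifold (Δ : SC V) : Prop :=
  Δ.Connected ∧ Δ.Pure 3 ∧ ∀ v ∈ Δ.vertexSet, (Δ.link {v}).IsSphere2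

/-- `Δ` is a disjoint union of cycles, each of length at least 4: it is
1-dimensional, 2-regular and its graph has no triangles. -/
def IsDisjointUnionOfCyclesGe4 (Δ : SC V) : Prop :=
  (∀ σ ∈ Δ.faces, σ.card ≤ 2) ∧
    (∀ v ∈ Δ.vertexSet, (Δ.link {v}).vertexSet.card = 2) ∧
    ∀ u v w : V, ({u, v} : Finset V) ∈ Δ.faces → ({v, w} : Finset V) ∈ Δ.faces →
      ({u, w} : Finset V) ∈ Δ.faces → u = v ∨ v = w ∨ u = w

end SC

/-! A facet `σ` contributes to `∑_{e ⊆ σ} f₀(lk e)` through the vertices `w` with `e ∪ {w}`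
a face. Counting per vertex, each vertex of `σ` is counted for the three edges of `σ` avoiding
it, and a vertex `w ∉ σ` for the edges inside the set of its neighbours in `σ`. By flagness
that set spans a face together with `w`, so it has at most three elements; and when it has
three it is a ridge of `σ`, whose second facet determines `w`. Hence at most four vertices
outside `σ` are counted three times and all others at most once:
`∑ ≤ 4 · 3 + (n - 4) + 4 · 2 = n + 16`. -/

namespace SC

variable {V : Type*} [DecidableEq V] (Δ : SC V)

theorem mem_vertexSet {w : V} : w ∈ Δ.vertexSet ↔ {w} ∈ Δ.faces :=
  ⟨fun h => by
    obtain ⟨τ, hτ, hw⟩ := mem_sup.1 h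
    exact Δ.down_closed hτ (singleton_subset_iff.2 hw),
   fun h => mem_sup.2 ⟨{w}, h, mem_singleton_self w⟩⟩

theorem subset_vertexSet {σ : Finset V} (hσ : σ ∈ Δ.faces) : σ ⊆ Δ.vertexSet := fun _ hv =>
  Δ.mem_vertexSet.2 (Δ.down_closed hσ (singleton_subset_iff.2 hv))

theorem vertexSet_link (e : Finset V) :
    (Δ.link e).vertexSet = {w ∈ Δ.vertexSet | w ∉ e ∧ insert w e ∈ Δ.faces} := by
  ext w
  simp only [mem_vertexSet, mem_filter, link, mem_insert, singleton_ne_empty, false_or,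
    disjoint_singleton_left, ← insert_eq]

theorem sum_card_vertexSet_link (E : Finset (Finset V)) :
    ∑ e ∈ E, (Δ.link e).vertexSet.card =
      ∑ w ∈ Δ.vertexSet, #{e ∈ E | w ∉ e ∧ insert w e ∈ Δ.faces} := by
  simp only [vertexSet_link, card_filter]
  exact sum_comm

def neighborsIn (σ : Finset V) (w : V) : Finset V := {v ∈ σ | {w, v} ∈ Δ.faces}

theorem neighborsIn_subset (σ : Finset V) (w : V) : Δ.neighborsIn σ w ⊆ σ := filter_subset _ _

theorem card_filter_insert_mem_faces_le (σ : Finset V) (w : V) :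
    #{e ∈ powersetCard 2 σ | w ∉ e ∧ insert w e ∈ Δ.faces} ≤
      ((Δ.neighborsIn σ w).erase w).card.choose 2 := by
  rw [← card_powersetCard]
  refine card_le_card fun e he => ?_
  obtain ⟨he, hwe, hface⟩ := mem_filter.1 he
  obtain ⟨heσ, he2⟩ := mem_powersetCard.1 he
  refine mem_powersetCard.2 ⟨fun v hv => ?_, he2⟩
  refine mem_erase.2 ⟨fun hvw => hwe (hvw ▸ hv), mem_filter.2 ⟨heσ hv, ?_⟩⟩
  exact Δ.down_closed hface (insert_subset_insert w (singleton_subset_iff.2 hv))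

theorem card_filter_insert_mem_faces_le_of_mem {σ : Finset V} {w : V} (hw : w ∈ σ) :
    #{e ∈ powersetCard 2 σ | w ∉ e ∧ insert w e ∈ Δ.faces} ≤ (σ.card - 1).choose 2 := by
  refine (Δ.card_filter_insert_mem_faces_le σ w).trans (Nat.choose_le_choose 2 ?_)
  rw [← card_erase_of_mem hw]
  exact card_le_card (erase_subset_erase w (Δ.neighborsIn_subset σ w))

theorem card_filter_insert_mem_faces_le_of_notMem {σ : Finset V} {w : V} (hw : w ∉ σ) :
    #{e ∈ powersetCard 2 σ | w ∉ e ∧ insert w e ∈ Δ.faces} ≤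
      (Δ.neighborsIn σ w).card.choose 2 := by
  rw [← erase_eq_of_notMem fun h => hw (Δ.neighborsIn_subset σ w h)]
  exact Δ.card_filter_insert_mem_faces_le σ w

variable {Δ}

theorem IsFlag.insert_mem_faces (hflag : Δ.IsFlag) {ρ : Finset V} {w : V}
    (hρ : ρ ∈ Δ.faces) (hne : ρ.Nonempty) (hw : ∀ v ∈ ρ, {w, v} ∈ Δ.faces) :
    insert w ρ ∈ Δ.faces := by
  obtain ⟨v₀, hv₀⟩ := hne
  have hww : {w, w} ∈ Δ.faces := by
    rw [insert_eq_self.2 (mem_singleton_self w)]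
    exact Δ.down_closed (hw v₀ hv₀) (singleton_subset_iff.2 (mem_insert_self _ _))
  refine hflag _ fun u hu v hv => ?_
  rcases mem_insert.1 hu with rfl | huρ <;> rcases mem_insert.1 hv with rfl | hvρ
  · exact hww
  · exact hw v hvρ
  · exact pair_comm v u ▸ hw u huρ
  · exact Δ.down_closed hρ (insert_subset huρ (singleton_subset_iff.2 hvρ))

theorem IsFlag.insert_neighborsIn_mem_faces (hflag : Δ.IsFlag) {σ : Finset V} {w : V}
    (hσ : σ ∈ Δ.faces) (hne : (Δ.neighborsIn σ w).Nonempty) :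
    insert w (Δ.neighborsIn σ w) ∈ Δ.faces :=
  hflag.insert_mem_faces (Δ.down_closed hσ (Δ.neighborsIn_subset σ w)) hne
    fun _ hv => (mem_filter.1 hv).2

theorem IsFlag.card_neighborsIn_lt (hflag : Δ.IsFlag) {σ : Finset V} {w : V}
    (hdim : ∀ τ ∈ Δ.faces, τ.card ≤ σ.card) (hσ : σ ∈ Δ.faces) (hne : σ.Nonempty)
    (hw : w ∉ σ) : (Δ.neighborsIn σ w).card < σ.card := by
  refine (card_le_card (Δ.neighborsIn_subset σ w)).lt_of_ne fun hcard => ?_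
  have hall : Δ.neighborsIn σ w = σ :=
    eq_of_subset_of_card_le (Δ.neighborsIn_subset σ w) hcard.ge
  have hface := hflag.insert_neighborsIn_mem_faces hσ (hall ▸ hne)
  rw [hall] at hface
  have := hdim _ hface
  rw [card_insert_of_notMem hw] at this
  omega

theorem IsWeakPseudo.eq_of_insert_mem_faces {D : ℕ} (hpseudo : Δ.IsWeakPseudo D)
    {σ ρ : Finset V} {w w' : V} (hσ : σ ∈ Δ.faces) (hσcard : σ.card = D + 1) (hρσ : ρ ⊆ σ)
    (hρ : ρ.card = D) (hw : w ∉ σ) (hw' : w' ∉ σ) (hwρ : insert w ρ ∈ Δ.faces)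
    (hw'ρ : insert w' ρ ∈ Δ.faces) : w = w' := by
  by_contra hne
  have hcofaces := hpseudo.2 ρ (Δ.down_closed hσ hρσ) hρ
  have hmem : ∀ {u}, u ∉ σ → insert u ρ ∈ Δ.faces →
      insert u ρ ∈ {τ ∈ Δ.faces | ρ ⊆ τ ∧ τ.card = D + 1} := fun hu huρ =>
    mem_filter.2 ⟨huρ, subset_insert _ _,
      by rw [card_insert_of_notMem fun h => hu (hρσ h), hρ]⟩
  have hnot : ∀ {u}, u ∉ σ → σ ≠ insert u ρ := fun hu h => hu (h ▸ mem_insert_self _ _)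
  have : 2 < #{τ ∈ Δ.faces | ρ ⊆ τ ∧ τ.card = D + 1} := two_lt_card.2
    ⟨σ, mem_filter.2 ⟨hσ, hρσ, hσcard⟩, _, hmem hw hwρ, _, hmem hw' hw'ρ, hnot hw, hnot hw',
      fun h => hne ((mem_insert.1 (h ▸ mem_insert_self w ρ)).resolve_right
        fun hwρ' => hw (hρσ hwρ'))⟩
  omega

theorem IsFlag.card_filter_card_neighborsIn_eq_le (hflag : Δ.IsFlag) {D : ℕ}
    (hpseudo : Δ.IsWeakPseudo D) (hD : D ≠ 0) {σ : Finset V} (hσ : σ ∈ Δ.faces)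
    (hσcard : σ.card = D + 1) :
    #{w ∈ Δ.vertexSet \ σ | (Δ.neighborsIn σ w).card = D} ≤ D + 1 := by
  set T := {w ∈ Δ.vertexSet \ σ | (Δ.neighborsIn σ w).card = D}
  have hmaps : Set.MapsTo (Δ.neighborsIn σ) T (powersetCard D σ) := fun w hw =>
    mem_powersetCard.2 ⟨Δ.neighborsIn_subset σ w, (mem_filter.1 hw).2⟩
  have hinj : Set.InjOn (Δ.neighborsIn σ) T := by
    intro w hw w' hw' heq
    simp only [T, coe_filter, mem_sdiff, Set.mem_ofPred_eq] at hw hw'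
    have hne : (Δ.neighborsIn σ w).Nonempty := card_pos.1 (by omega)
    refine hpseudo.eq_of_insert_mem_faces hσ hσcard (Δ.neighborsIn_subset σ w) hw.2 hw.1.2
      hw'.1.2 (hflag.insert_neighborsIn_mem_faces hσ hne) ?_
    rw [heq] at hne ⊢
    exact hflag.insert_neighborsIn_mem_faces hσ hne
  calc _ ≤ #(powersetCard D σ) := card_le_card_of_injOn _ hmaps hinj
    _ = D + 1 := by rw [card_powersetCard, hσcard, Nat.choose_succ_self_right]

end SC

/-- In a flag weak 3-pseudomanifold on `n` vertices, for any facet `σ`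
the sum of `f₀(lk e)` over the six edges `e ⊆ σ` is at most `n + 16`. -/
theorem statement_6 {V : Type*} [DecidableEq V] (Δ : SC V) (n : ℕ)
    (hflag : Δ.IsFlag) (hpseudo : Δ.IsWeakPseudo 3) (hn : Δ.vertexSet.card = n)
    (σ : Finset V) (hσ : Δ.IsFacet σ) (hcard : σ.card = 4) :
    ∑ e ∈ Finset.powersetCard 2 σ, (Δ.link e).vertexSet.card ≤ n + 16 := by
  have hσV := Δ.subset_vertexSet hσ.1
  have h4n : 4 ≤ n := hn ▸ hcard ▸ card_le_card hσV
  have hinside (w) (hw : w ∈ σ) : #{e ∈ powersetCard 2 σ | w ∉ e ∧ insert w e ∈ Δ.faces} ≤ 3 :=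
    (Δ.card_filter_insert_mem_faces_le_of_mem hw).trans_eq (by rw [hcard]; rfl)
  have houtside (w) (hw : w ∈ Δ.vertexSet \ σ) :
      #{e ∈ powersetCard 2 σ | w ∉ e ∧ insert w e ∈ Δ.faces} ≤
        1 + 2 * if (Δ.neighborsIn σ w).card = 3 then 1 else 0 := by
    have hwσ := (mem_sdiff.1 hw).2
    have hlt := hflag.card_neighborsIn_lt (fun τ hτ => hcard ▸ hpseudo.1.1 τ hτ) hσ.1
      (card_pos.1 (by omega)) hwσ
    rw [hcard] at hlt
    refine (Δ.card_filter_insert_mem_faces_le_of_notMem hwσ).trans ?_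
    generalize (Δ.neighborsIn σ w).card = k at hlt ⊢
    interval_cases k <;> decide
  have hfull := hflag.card_filter_card_neighborsIn_eq_le hpseudo (by norm_num) hσ.1 hcard
  rw [Δ.sum_card_vertexSet_link, ← sum_sdiff hσV]
  calc _ ≤ ∑ w ∈ Δ.vertexSet \ σ, (1 + 2 * if (Δ.neighborsIn σ w).card = 3 then 1 else 0) +
        ∑ w ∈ σ, 3 := add_le_add (sum_le_sum houtside) (sum_le_sum hinside)
    _ = (n - 4) + 2 * #{w ∈ Δ.vertexSet \ σ | (Δ.neighborsIn σ w).card = 3} + 12 := by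
      rw [sum_add_distrib, ← mul_sum, ← card_filter, sum_const, sum_const,
        card_sdiff_of_subset hσV, hn, hcard, smul_eq_mul, smul_eq_mul, mul_one]
    _ ≤ n + 16 := by omega
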